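/- arXiv:2504.21678 — 10 statements merged into one kernel-verified Lean document; each statement's English description precedes it below -/
import Mathlib

section
/- Let $(X,r)$ be a set-theoretic solution to the Yang–Baxter equation and let $F\colon X\times X\to X\times X$ and $\Phi,\Psi\colon X^3\to X^3$ be bijections satisfying $F_{12}\Psi = F_{23}\Phi$, $\Psi r_{12} = r_{12}\Psi$, and $\Phi r_{23} = r_{23}\Phi$. Then $r^F := F r F^{-1}$ also satisfies the Yang–Baxter equation $r^F_{12} r^F_{23} r^F_{12} = r^F_{23} r^F_{12} r^F_{23}$. -/
/-- Application of a map `s : X² → X²` on the first two factors of `X³`. -/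
def d12 {X : Type*} (s : X × X → X × X) : X × X × X → X × X × X :=
  fun p => ((s (p.1, p.2.1)).1, (s (p.1, p.2.1)).2, p.2.2)

/-- Application of a map `s : X² → X²` on the last two factors of `X³`. -/
def d23 {X : Type*} (s : X × X → X × X) : X × X × X → X × X × X :=
  fun p => (p.1, s p.2)

/-- Set-theoretic Yang–Baxter equation. -/
def YBE {X : Type*} (r : X × X → X × X) : Prop :=
  d12 r ∘ d23 r ∘ d12 r = d23 r ∘ d12 r ∘ d23 r

/-- `(F, Φ, Ψ)` is a Drinfeld twist for `r`. -/
def IsDrinfeldTwist {X : Type*} (r : X × X → X × X) (F : X × X ≃ X × X)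
    (Φ Ψ : (X × X × X) ≃ (X × X × X)) : Prop :=
  d12 ⇑F ∘ ⇑Ψ = d23 ⇑F ∘ ⇑Φ ∧ ⇑Ψ ∘ d12 r = d12 r ∘ ⇑Ψ ∧ ⇑Φ ∘ d23 r = d23 r ∘ ⇑Φ

/-- The twisted map `r^F = F r F⁻¹`. -/
def twist {X : Type*} (r : X × X → X × X) (F : X × X ≃ X × X) : X × X → X × X :=
  ⇑F ∘ r ∘ ⇑F.symm

lemma d12_comp {X : Type*} (f g : X × X → X × X) : d12 (f ∘ g) = d12 f ∘ d12 g := by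
  funext p; simp [d12, Function.comp]

lemma d23_comp {X : Type*} (f g : X × X → X × X) : d23 (f ∘ g) = d23 f ∘ d23 g := by
  funext p; simp [d23, Function.comp]

lemma d12_left_inv {X : Type*} (F : X × X ≃ X × X) (p : X × X × X) :
    d12 ⇑F.symm (d12 ⇑F p) = p := by
  simp [d12]

lemma d12_right_inv {X : Type*} (F : X × X ≃ X × X) (p : X × X × X) :
    d12 ⇑F (d12 ⇑F.symm p) = p := by
  simp [d12]

lemma d23_left_inv {X : Type*} (F : X × X ≃ X × X) (p : X × X × X) :
    d23 ⇑F.symm (d23 ⇑F p) = p := by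
  simp [d23]

lemma d23_right_inv {X : Type*} (F : X × X ≃ X × X) (p : X × X × X) :
    d23 ⇑F (d23 ⇑F.symm p) = p := by
  simp [d23]

theorem stmt0 {X : Type*} (r : X × X → X × X) (hr : YBE r)
    (F : X × X ≃ X × X) (Φ Ψ : (X × X × X) ≃ (X × X × X))
    (h : IsDrinfeldTwist r F Φ Ψ) :
    YBE (twist r F) := by
  obtain ⟨h1, h2, h3⟩ := h
  have c1 : ∀ p, d12 ⇑F (Ψ p) = d23 ⇑F (Φ p) := fun p => congrFun h1 p
  have c2 : ∀ p, Ψ (d12 r p) = d12 r (Ψ p) := fun p => congrFun h2 p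
  have c3 : ∀ p, Φ (d23 r p) = d23 r (Φ p) := fun p => congrFun h3 p
  have hr' : ∀ p, d12 r (d23 r (d12 r p)) = d23 r (d12 r (d23 r p)) := fun p => congrFun hr p
  have c2' : ∀ p, Ψ.symm (d12 r p) = d12 r (Ψ.symm p) := by
    intro p
    have := c2 (Ψ.symm p)
    rw [Ψ.apply_symm_apply] at this
    rw [← this, Ψ.symm_apply_apply]
  have c3' : ∀ p, Φ.symm (d23 r p) = d23 r (Φ.symm p) := by
    intro p
    have := c3 (Φ.symm p)
    rw [Φ.apply_symm_apply] at this
    rw [← this, Φ.symm_apply_apply]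
  have k1 : ∀ p, d12 ⇑F.symm (d23 ⇑F p) = Ψ (Φ.symm p) := by
    intro p
    have := c1 (Φ.symm p)
    rw [Φ.apply_symm_apply] at this
    rw [← this, d12_left_inv]
  have k2 : ∀ p, d23 ⇑F.symm (d12 ⇑F p) = Φ (Ψ.symm p) := by
    intro p
    have := c1 (Ψ.symm p)
    rw [Ψ.apply_symm_apply] at this
    rw [this, d23_left_inv]
  have k4 : ∀ p, Ψ.symm (d12 ⇑F.symm p) = Φ.symm (d23 ⇑F.symm p) := by
    intro p
    have h5 := c1 (Φ.symm (d23 ⇑F.symm p))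
    rw [Φ.apply_symm_apply, d23_right_inv] at h5
    have h6 := congrArg (d12 ⇑F.symm) h5
    rw [d12_left_inv] at h6
    calc Ψ.symm (d12 ⇑F.symm p) = Ψ.symm (Ψ (Φ.symm (d23 ⇑F.symm p))) := by rw [h6]
      _ = Φ.symm (d23 ⇑F.symm p) := Ψ.symm_apply_apply _
  unfold YBE twist
  simp only [d12_comp, d23_comp]
  funext x
  simp only [Function.comp_apply]
  simp only [k1, k2, k4, c2', c3', c3, ← c2, hr', Equiv.symm_apply_apply,
    Equiv.apply_symm_apply, c1, d12_left_inv, d23_left_inv, d12_right_inv, d23_right_inv]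
end

section
/- Let $(X,r)$ be a non-degenerate set-theoretic solution to the Yang–Baxter equation, written $r(a,b) = (a\rightharpoonup b,\; a\leftharpoonup b)$, and let $k\colon X\to X$ be a reflection for $r$. Then the guitar map $J\colon X^2\to X^2$, $J(a,b) = (a\leftharpoonup k(b),\; b)$, is a Drinfeld twist for $r$, with $\Phi(a,b,c) = \big((a\leftharpoonup(b\rightharpoonup k(c)))\leftharpoonup k(b\leftharpoonup k(c)),\; b,\; c\big)$ and $\Psi(a,b,c) = \big(a\leftharpoonup(b\rightharpoonup k(c)),\; b\leftharpoonup k(c),\; c\big)$. -/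
/-- `k` satisfies the (right) reflection equation `k₂ r k₂ r = r k₂ r k₂` w.r.t. `r`. -/
def IsReflection {X : Type*} (r : X × X → X × X) (k : X → X) : Prop :=
  (fun p : X × X => (p.1, k p.2)) ∘ r ∘ (fun p : X × X => (p.1, k p.2)) ∘ r
    = r ∘ (fun p : X × X => (p.1, k p.2)) ∘ r ∘ (fun p : X × X => (p.1, k p.2))

/-- `(F, Φ, Ψ)` is a Drinfeld twist for `r` (all maps required to be bijective). -/
def IsDrinfeldTwistFun {X : Type*} (r F : X × X → X × X) (Φ Ψ : X × X × X → X × X × X) : Prop :=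
  Function.Bijective F ∧ Function.Bijective Φ ∧ Function.Bijective Ψ ∧
  d12 F ∘ Ψ = d23 F ∘ Φ ∧ Ψ ∘ d12 r = d12 r ∘ Ψ ∧ Φ ∘ d23 r = d23 r ∘ Φ

theorem stmt5 {X : Type*} (r : X × X → X × X) (hr : YBE r)
    (hnd1 : ∀ a : X, Function.Bijective fun b => (r (a, b)).1)
    (hnd2 : ∀ b : X, Function.Bijective fun a => (r (a, b)).2)
    (k : X → X) (hk : IsReflection r k) :
    IsDrinfeldTwistFun r
      (fun p : X × X => ((r (p.1, k p.2)).2, p.2))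
      (fun p : X × X × X =>
        ((r ((r (p.1, (r (p.2.1, k p.2.2)).1)).2, k ((r (p.2.1, k p.2.2)).2))).2,
          p.2.1, p.2.2))
      (fun p : X × X × X =>
        ((r (p.1, (r (p.2.1, k p.2.2)).1)).2, (r (p.2.1, k p.2.2)).2, p.2.2)) := by
  have inj2 : ∀ x : X, ∀ a a' : X, (r (a, x)).2 = (r (a', x)).2 → a = a' :=
    fun x a a' h => (hnd2 x).1 h
  have surj2 : ∀ x c : X, ∃ a, (r (a, x)).2 = c := fun x c => (hnd2 x).2 c
  refine ⟨?_, ?_, ?_, ?_, ?_, ?_⟩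
  · constructor
    · rintro ⟨a, b⟩ ⟨a', b'⟩ h
      simp only [Prod.mk.injEq] at h
      obtain ⟨h1, h2⟩ := h
      subst h2
      exact Prod.ext (inj2 (k b) a a' h1) rfl
    · rintro ⟨c, b⟩
      obtain ⟨a, ha⟩ := surj2 (k b) c
      exact ⟨(a, b), by simp [ha]⟩
  · constructor
    · rintro ⟨a, b, c⟩ ⟨a', b', c'⟩ h
      simp only [Prod.mk.injEq] at h
      obtain ⟨h1, h2, h3⟩ := h
      subst h2; subst h3
      have := inj2 (k ((r (b, k c)).2)) _ _ h1
      have := inj2 ((r (b, k c)).1) _ _ this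
      simp [this]
    · rintro ⟨A, b, c⟩
      obtain ⟨a'', ha''⟩ := surj2 (k ((r (b, k c)).2)) A
      obtain ⟨a, ha⟩ := surj2 ((r (b, k c)).1) a''
      exact ⟨(a, b, c), by simp [ha, ha'']⟩
  · constructor
    · rintro ⟨a, b, c⟩ ⟨a', b', c'⟩ h
      simp only [Prod.mk.injEq] at h
      obtain ⟨h1, h2, h3⟩ := h
      subst h3
      have hb : b = b' := inj2 (k c) _ _ h2
      subst hb
      have := inj2 ((r (b, k c)).1) _ _ h1
      simp [this]
    · rintro ⟨A, B, c⟩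
      obtain ⟨b, hb⟩ := surj2 (k c) B
      obtain ⟨a, ha⟩ := surj2 ((r (b, k c)).1) A
      exact ⟨(a, b, c), by simp [ha, hb]⟩
  · funext p
    rfl
  · funext p
    obtain ⟨a, b, c⟩ := p
    have h := congrFun hr (a, b, k c)
    simp only [Function.comp_apply, d12, d23, Prod.ext_iff] at h
    simp only [Function.comp_apply, d12, d23, Prod.mk.injEq]
    obtain ⟨h1, h2, h3⟩ := h
    exact ⟨h2, h3, trivial⟩
  · funext p
    obtain ⟨a, b, c⟩ := p
    have hkbc := congrFun hk (b, c)
    simp only [Function.comp_apply, Prod.ext_iff] at hkbc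
    obtain ⟨hR1, hR2⟩ := hkbc
    have h := congrFun hr (a, (r (b, k c)).1, k ((r (b, k c)).2))
    simp only [Function.comp_apply, d12, d23, Prod.ext_iff] at h
    simp only [Function.comp_apply, d12, d23, Prod.mk.injEq]
    obtain ⟨h1, h2, h3⟩ := h
    refine ⟨?_, trivial⟩
    rw [hR1, hR2, h3]
end

section
/- Let $X$ be a set and $\lambda,\rho\in\mathrm{Sym}(X)$ commuting permutations, giving the permutation solution $r(a,b) = (\lambda(b),\rho(a))$. Then $r$ is related by a Drinfeld twist to the permutation solution $(a,b)\mapsto(\rho\lambda(b), a)$; in particular, the class of $r$ modulo Drinfeld twists depends only on the product $\rho\lambda$. -/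
theorem stmt7 {X : Type*} (lam rho : Equiv.Perm X) (hc : lam * rho = rho * lam) :
    ∃ (F : X × X ≃ X × X) (Φ Ψ : (X × X × X) ≃ (X × X × X)),
      IsDrinfeldTwist (fun p : X × X => (lam p.2, rho p.1)) F Φ Ψ ∧
      twist (fun p : X × X => (lam p.2, rho p.1)) F
        = fun p : X × X => (rho (lam p.2), p.1) := by
  have h : ∀ x, lam (rho x) = rho (lam x) := fun x => by
    simpa [Equiv.Perm.mul_apply] using Equiv.ext_iff.mp hc x
  refine ⟨rho.prodCongr (Equiv.refl X),
    (rho.trans rho).prodCongr (Equiv.refl (X × X)),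
    rho.prodCongr (rho.prodCongr (Equiv.refl X)), ⟨?_, ?_, ?_⟩, ?_⟩ <;>
    funext p <;>
    simp [d12, d23, twist, Function.comp, h, Prod.map, Prod.ext_iff]
end

section
/- There exist a set $X$, set-theoretic solutions $r,s$ on $X$, and a bijection $F\colon X^2\to X^2$ with $Fr = sF$ (a D-isomorphism), such that $F$ is not a Drinfeld twist for $r$, i.e. there are no bijections $\Phi,\Psi\colon X^3\to X^3$ with $F_{12}\Psi = F_{23}\Phi$, $\Psi r_{12} = r_{12}\Psi$, $\Phi r_{23} = r_{23}\Phi$. -/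
section aux

/-- The concrete solution `r(a,b) = (a ∧ b, a ∧ b)`. -/
def rr : Bool × Bool → Bool × Bool := fun p => (p.1 && p.2, p.1 && p.2)

/-- The concrete D-isomorphism `F(a,b) = (a, a == b)`. -/
def FF : Bool × Bool → Bool × Bool := fun p => (p.1, p.1 == p.2)

/-- The twisted solution `s = F ∘ r ∘ F⁻¹`. -/
def ss : Bool × Bool → Bool × Bool := fun p => (p.1 && p.2, true)

/-- Singleton-fiber fixed points are preserved under a commuting bijection. -/
lemma fiber_pres {X : Type*} {R Ψ : X → X} (hb : Function.Bijective Ψ)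
    (hc : Ψ ∘ R = R ∘ Ψ) {z : X} (h1 : R z = z) (h2 : ∀ x, R x = z → x = z) :
    R (Ψ z) = Ψ z ∧ ∀ x, R x = Ψ z → x = Ψ z := by
  constructor
  · have := congrFun hc z
    simp only [Function.comp_apply, h1] at this
    exact this.symm
  · intro x hx
    obtain ⟨x', rfl⟩ := hb.surjective x
    have hcx := congrFun hc x'
    simp only [Function.comp_apply] at hcx
    have : Ψ (R x') = Ψ z := by rw [hcx, hx]
    have hRz : R x' = z := hb.injective this
    rw [h2 x' hRz]

end aux

theorem stmt10 :
    ∃ (X : Type) (r s : X × X → X × X) (F : X × X → X × X),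
      YBE r ∧ YBE s ∧ Function.Bijective F ∧ F ∘ r = s ∘ F ∧
      ¬ ∃ Φ Ψ : X × X × X → X × X × X, IsDrinfeldTwistFun r F Φ Ψ := by
  refine ⟨Bool, rr, ss, FF, by unfold YBE; decide, by unfold YBE; decide, by decide, by decide, ?_⟩
  rintro ⟨Φ, Ψ, hFb, hΦb, hΨb, h4, h5, h6⟩
  -- Φ is determined by Ψ : Φ x = d23 FF (d12 FF (Ψ x))
  have hinv : ∀ y : Bool × Bool × Bool, d23 FF (d23 FF y) = y := by decide
  have hg : ∀ x, Φ x = d23 FF (d12 FF (Ψ x)) := by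
    intro x
    have := congrFun h4 x
    simp only [Function.comp_apply] at this
    rw [this, hinv]
  -- characterization of singleton-fiber fixed points of d12 rr and d23 rr
  have c12 : ∀ z : Bool × Bool × Bool,
      (d12 rr z = z ∧ ∀ x, d12 rr x = z → x = z) ↔
        (z = (true, true, false) ∨ z = (true, true, true)) := by decide
  have c23 : ∀ z : Bool × Bool × Bool,
      (d23 rr z = z ∧ ∀ x, d23 rr x = z → x = z) ↔
        (z = (false, true, true) ∨ z = (true, true, true)) := by decide
  -- Ψ preserves {(t,t,f),(t,t,t)} and Φ preserves {(f,t,t),(t,t,t)}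
  have hΨpres : ∀ z, (z = (true, true, false) ∨ z = (true, true, true)) →
      (Ψ z = (true, true, false) ∨ Ψ z = (true, true, true)) := by
    intro z hz
    obtain ⟨h1, h2⟩ := (c12 z).mpr hz
    exact (c12 (Ψ z)).mp (fiber_pres hΨb h5 h1 h2)
  have hΦpres : ∀ z, (z = (false, true, true) ∨ z = (true, true, true)) →
      (Φ z = (false, true, true) ∨ Φ z = (true, true, true)) := by
    intro z hz
    obtain ⟨h1, h2⟩ := (c23 z).mpr hz
    exact (c23 (Φ z)).mp (fiber_pres hΦb h6 h1 h2)
  -- Step 1: Ψ (t,t,t) = (t,t,t) and Φ (t,t,t) = (t,t,t)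
  have hΨt : Ψ (true, true, true) = (true, true, true) := by
    rcases hΨpres (true, true, true) (Or.inr rfl) with h | h
    · exfalso
      have hφ := hg (true, true, true)
      rw [h] at hφ
      rcases hΦpres (true, true, true) (Or.inr rfl) with h' | h' <;>
        rw [h'] at hφ <;> revert hφ <;> decide
    · exact h
  have hΦt : Φ (true, true, true) = (true, true, true) := by
    have hφ := hg (true, true, true)
    rw [hΨt] at hφ
    rw [hφ]; decide
  -- Step 2: Φ (f,t,t) = (f,t,t)
  have hΦf : Φ (false, true, true) = (false, true, true) := by
    rcases hΦpres (false, true, true) (Or.inl rfl) with h | h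
    · exact h
    · exfalso
      have := hΦb.injective (h.trans hΦt.symm)
      revert this; decide
  -- Step 3: Ψ (f,t,t) = (f,f,t)
  have hΨf : Ψ (false, true, true) = (false, false, true) := by
    have hφ := hg (false, true, true)
    rw [hΦf] at hφ
    rcases hv : Ψ (false, true, true) with ⟨a, b, c⟩
    rw [hv] at hφ
    revert hφ
    cases a <;> cases b <;> cases c <;> decide
  -- Step 4: Ψ (f,f,t) = (f,f,t), contradicting injectivity
  have hc := congrFun h5 (false, true, true)
  simp only [Function.comp_apply] at hc
  rw [hΨf] at hc
  have hd12 : d12 rr (false, true, true) = (false, false, true) := by decide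
  have hd12' : d12 rr (false, false, true) = (false, false, true) := by decide
  rw [hd12, hd12'] at hc
  -- hc : Ψ (false, false, true) = (false, false, true)
  have := hΨb.injective (hc.trans hΨf.symm)
  revert this; decide
end

section
/- Let $(G,r)$ be a braided group with $r(a,b)=(a\rightharpoonup b, a\leftharpoonup b)$, and let $k\colon G\to G$ be a group reflection, i.e. $k(1)=1$, $k(ab) = (a\rightharpoonup k(b))\,k(a\leftharpoonup k(b))$, and $k(a) = (a\rightharpoonup b)\rightharpoonup k(a\leftharpoonup b)$ for all $a,b\in G$. Then $k$ satisfies the reflection equation $k_2 r k_2 r = r k_2 r k_2$, where $k_2 = \mathrm{id}\times k$. -/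
/-- A braiding on a group `G`: `r(a,b) = (a ⇀ b, a ↼ b)` with `⇀` a left action,
`↼` a right action, `r(a,1)=(1,a)`, `r(1,b)=(b,1)`, `(a⇀b)(a↼b)=ab`,
and the hexagon compatibilities. -/
structure Braiding (G : Type*) [Group G] where
  hp : G → G → G
  hm : G → G → G
  bij : Function.Bijective fun p : G × G => (hp p.1 p.2, hm p.1 p.2)
  one_hp : ∀ b, hp 1 b = b
  mul_hp : ∀ a b c, hp (a * b) c = hp a (hp b c)
  hm_one : ∀ a, hm a 1 = a
  hm_mul : ∀ a b c, hm a (b * c) = hm (hm a b) c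
  hp_one : ∀ a, hp a 1 = 1
  one_hm : ∀ b, hm 1 b = 1
  compat : ∀ a b, hp a b * hm a b = a * b
  hex1 : ∀ a b c, hp a (b * c) = hp a b * hp (hm a b) c
  hex2 : ∀ a b c, hm (a * b) c = hm a (hp b c) * hm b c

/-- The braiding as a map `G × G → G × G`. -/
def Braiding.r {G : Type*} [Group G] (B : Braiding G) : G × G → G × G :=
  fun p => (B.hp p.1 p.2, B.hm p.1 p.2)

/-- `k` is a group reflection for the braided group `(G, r)`. -/
def Braiding.IsGroupReflection {G : Type*} [Group G] (B : Braiding G) (k : G → G) : Prop :=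
  k 1 = 1 ∧ (∀ a b, k (a * b) = B.hp a (k b) * k (B.hm a (k b))) ∧
  ∀ a b, k a = B.hp (B.hp a b) (k (B.hm a b))

theorem stmt11 {G : Type*} [Group G] (B : Braiding G) (k : G → G)
    (hk : B.IsGroupReflection k) :
    (fun p : G × G => (p.1, k p.2)) ∘ B.r ∘ (fun p : G × G => (p.1, k p.2)) ∘ B.r
      = B.r ∘ (fun p : G × G => (p.1, k p.2)) ∘ B.r ∘ (fun p : G × G => (p.1, k p.2)) := by
  obtain ⟨h1, h2, h3⟩ := hk
  funext p
  obtain ⟨a, b⟩ := p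
  simp only [Function.comp, Braiding.r]
  refine Prod.ext ?_ ?_
  · simp only [← h3]
  · have e1 : k (a * b) = k a * k (B.hm (B.hp a b) (k (B.hm a b))) := by
      conv_lhs => rw [← B.compat a b]
      rw [h2 (B.hp a b) (B.hm a b), ← h3 a b]
    have e2 : k a * B.hm (B.hp a (k b)) (k (B.hm a (k b))) = k (a * b) := by
      rw [h3 a (k b), B.compat, ← h2 a b]
    have := e2.trans e1
    exact (mul_left_cancel this).symm
end

section
/- Let $(G,r)$ be a braided group and let $k\colon G\to G$ satisfy $k(1)=1$ and $k(ab) = (a\rightharpoonup k(b))\,k(a\leftharpoonup k(b))$ for all $a,b\in G$. For $(a,b)\in G\times G$, write $(a_1,b_1) = k_2 r k_2 r(a,b)$ and $(a_2,b_2) = r k_2 r k_2(a,b)$, where $k_2 = \mathrm{id}\times k$. Then $a_1 b_1 = a_2 b_2$. -/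
theorem stmt12 {G : Type*} [Group G] (B : Braiding G) (k : G → G)
    (h1 : k 1 = 1) (h2 : ∀ a b, k (a * b) = B.hp a (k b) * k (B.hm a (k b)))
    (a b : G) :
    (((fun p : G × G => (p.1, k p.2)) ∘ B.r ∘ (fun p : G × G => (p.1, k p.2)) ∘ B.r) (a, b)).1
      * (((fun p : G × G => (p.1, k p.2)) ∘ B.r ∘ (fun p : G × G => (p.1, k p.2)) ∘ B.r) (a, b)).2
    = ((B.r ∘ (fun p : G × G => (p.1, k p.2)) ∘ B.r ∘ (fun p : G × G => (p.1, k p.2))) (a, b)).1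
      * ((B.r ∘ (fun p : G × G => (p.1, k p.2)) ∘ B.r ∘ (fun p : G × G => (p.1, k p.2))) (a, b)).2 := by
  simp only [Function.comp, Braiding.r]
  rw [← h2, B.compat, B.compat, ← h2]
end

section
/- Let $(G,r)$ be a braided group and $k$ a group reflection for $r$. Then the guitar map $J(a,b)=(a\leftharpoonup k(b), b)$ is a group Drinfeld twist for $(G,r)$; consequently $G^{(k)} := (G, m\circ J^{-1}, 1)$ is a group and $J r J^{-1}$ is a braiding on $G^{(k)}$. -/
/-- `(F, Φ, Ψ)` is a group Drinfeld twist for the braided group `(G, r)`: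
a set-theoretic Drinfeld twist satisfying additionally (BDT1)–(BDT4). -/
def IsGroupDrinfeldTwist {G : Type*} [Group G] (r F : G × G → G × G)
    (Φ Ψ : G × G × G → G × G × G) : Prop :=
  Function.Bijective F ∧ Function.Bijective Φ ∧ Function.Bijective Ψ ∧
  d12 F ∘ Ψ = d23 F ∘ Φ ∧ Ψ ∘ d12 r = d12 r ∘ Ψ ∧ Φ ∘ d23 r = d23 r ∘ Φ ∧
  (∀ b c : G, Φ (1, b, c) = (1, b, c)) ∧ (∀ a b : G, Ψ (a, b, 1) = (a, b, 1)) ∧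
  (∀ a : G, F (a, 1) = (a, 1)) ∧ (∀ b : G, F (1, b) = (1, b)) ∧
  (∀ p : G × G × G, ((Φ p).1, (Φ p).2.1 * (Φ p).2.2) = F (p.1, p.2.1 * p.2.2)) ∧
  (∀ p : G × G × G, ((Ψ p).1 * (Ψ p).2.1, (Ψ p).2.2) = F (p.1 * p.2.1, p.2.2))

/-- The data `(mul, e, s)` makes `G` a braided group: `mul` is a group structure
with unit `e`, and `s` is a braiding for it (axioms BG1–BG5 of Lu–Yan–Zhu). -/
structure IsBraidedGroupStruct {G : Type*} (mul : G → G → G) (e : G)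
    (s : G × G → G × G) : Prop where
  assoc : ∀ a b c, mul (mul a b) c = mul a (mul b c)
  one_mul' : ∀ a, mul e a = a
  mul_one' : ∀ a, mul a e = a
  inv_ex : ∀ a, ∃ b, mul a b = e ∧ mul b a = e
  bij : Function.Bijective s
  unit1 : ∀ a, s (a, e) = (e, a)
  unit2 : ∀ b, s (e, b) = (b, e)
  compat : ∀ a b, mul (s (a, b)).1 (s (a, b)).2 = mul a b
  hex1 : s ∘ (fun p : G × G × G => (p.1, mul p.2.1 p.2.2))
    = (fun p : G × G × G => (mul p.1 p.2.1, p.2.2)) ∘ d23 s ∘ d12 s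
  hex2 : s ∘ (fun p : G × G × G => (mul p.1 p.2.1, p.2.2))
    = (fun p : G × G × G => (p.1, mul p.2.1 p.2.2)) ∘ d12 s ∘ d23 s

namespace S14

variable {G : Type*} [Group G] (B : Braiding G) (k : G → G)

theorem hm_cancel (a b : G) : B.hm (B.hm a b) b⁻¹ = a := by
  rw [← B.hm_mul, mul_inv_cancel, B.hm_one]

theorem hm_cancel' (a b : G) : B.hm (B.hm a b⁻¹) b = a := by
  rw [← B.hm_mul, inv_mul_cancel, B.hm_one]

theorem hp_inv (a b : G) : B.hp (B.hm a b) b⁻¹ = (B.hp a b)⁻¹ := by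
  have h := B.hex1 a b b⁻¹
  rw [mul_inv_cancel, B.hp_one] at h
  exact eq_inv_of_mul_eq_one_right h.symm

theorem hp_inv' (a b : G) : B.hp (B.hm a b⁻¹) b = (B.hp a b⁻¹)⁻¹ := by
  have h := hp_inv B a b⁻¹
  rwa [inv_inv] at h

theorem middle (a b c : G) :
    B.hm (B.hp a b) (B.hp (B.hm a b) c) = B.hp (B.hm a (B.hp b c)) (B.hm b c) := by
  have e1 : B.hp (B.hp a b) (B.hp (B.hm a b) c) = B.hp a (B.hp b c) := by
    rw [← B.mul_hp, B.compat, B.mul_hp]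
  have e2 : B.hm (B.hm a (B.hp b c)) (B.hm b c) = B.hm (B.hm a b) c := by
    rw [← B.hm_mul, B.compat, B.hm_mul]
  have L : B.hp a (B.hp b c) * B.hm (B.hp a b) (B.hp (B.hm a b) c) * B.hm (B.hm a b) c
      = a * b * c := by
    rw [← e1, B.compat, mul_assoc, B.compat, ← mul_assoc, B.compat]
  have R : B.hp a (B.hp b c) * B.hp (B.hm a (B.hp b c)) (B.hm b c) * B.hm (B.hm a b) c
      = a * b * c := by
    rw [← e2, mul_assoc, B.compat, ← mul_assoc, B.compat, mul_assoc, B.compat, ← mul_assoc]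
  exact mul_left_cancel (mul_right_cancel (L.trans R.symm))

/-! maps -/

def Fm : G × G → G × G := fun p => (B.hm p.1 (k p.2), p.2)
def Fi : G × G → G × G := fun p => (B.hm p.1 (k p.2)⁻¹, p.2)
def Ph : G × G × G → G × G × G := fun p => (B.hm p.1 (k (p.2.1 * p.2.2)), p.2.1, p.2.2)
def Phi : G × G × G → G × G × G := fun p => (B.hm p.1 (k (p.2.1 * p.2.2))⁻¹, p.2.1, p.2.2)
def Ps : G × G × G → G × G × G :=
  fun p => (B.hm p.1 (B.hp p.2.1 (k p.2.2)), B.hm p.2.1 (k p.2.2), p.2.2)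
def Psi : G × G × G → G × G × G :=
  fun p => (B.hm p.1 (B.hp (B.hm p.2.1 (k p.2.2)⁻¹) (k p.2.2))⁻¹, B.hm p.2.1 (k p.2.2)⁻¹, p.2.2)
def mm12 : G × G × G → G × G := fun p => (p.1 * p.2.1, p.2.2)
def mm23 : G × G × G → G × G := fun p => (p.1, p.2.1 * p.2.2)

theorem Fi_Fm (p : G × G) : Fi B k (Fm B k p) = p := by simp [Fi, Fm, hm_cancel]
theorem Fm_Fi (p : G × G) : Fm B k (Fi B k p) = p := by simp [Fi, Fm, hm_cancel']
theorem Phi_Ph (p : G × G × G) : Phi B k (Ph B k p) = p := by simp [Phi, Ph, hm_cancel]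
theorem Ph_Phi (p : G × G × G) : Ph B k (Phi B k p) = p := by simp [Phi, Ph, hm_cancel']
theorem Psi_Ps (p : G × G × G) : Psi B k (Ps B k p) = p := by
  simp [Psi, Ps, hm_cancel, hm_cancel']
theorem Ps_Psi (p : G × G × G) : Ps B k (Psi B k p) = p := by
  simp [Psi, Ps, hm_cancel']

theorem refl_aux (hk2 : ∀ a b : G, k (a * b) = B.hp a (k b) * k (B.hm a (k b)))
    (y z : G) :
    k (B.hm y (k z)⁻¹ * z) = B.hp (B.hm y (k z)⁻¹) (k z) * k y := by
  rw [hk2, hm_cancel']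

theorem t1 (hk2 : ∀ a b : G, k (a * b) = B.hp a (k b) * k (B.hm a (k b)))
    (p : G × G × G) : d12 (Fm B k) (Ps B k p) = d23 (Fm B k) (Ph B k p) := by
  obtain ⟨a, b, c⟩ := p
  simp only [d12, d23, Fm, Ps, Ph]
  rw [← B.hm_mul, ← hk2]

theorem ta (hk2 : ∀ a b : G, k (a * b) = B.hp a (k b) * k (B.hm a (k b)))
    (q : G × G × G) :
    d12 (Fi B k) (d23 (Fm B k) q) = Ps B k (Phi B k q) := by
  obtain ⟨x, y, z⟩ := q
  simp only [d12, d23, Fi, Fm, Ps, Phi]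
  rw [← B.hm_mul x (k (y * z))⁻¹ (B.hp y (k z)), hk2 y z, mul_inv_rev, mul_assoc,
    inv_mul_cancel, mul_one]

theorem tb (hk2 : ∀ a b : G, k (a * b) = B.hp a (k b) * k (B.hm a (k b)))
    (q : G × G × G) :
    d23 (Fi B k) (d12 (Fm B k) q) = Ph B k (Psi B k q) := by
  obtain ⟨x, y, z⟩ := q
  simp only [d12, d23, Fi, Fm, Ph, Psi]
  rw [← B.hm_mul x (B.hp (B.hm y (k z)⁻¹) (k z))⁻¹ (k (B.hm y (k z)⁻¹ * z)),
    refl_aux B k hk2 y z, inv_mul_cancel_left]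

theorem tc (hk2 : ∀ a b : G, k (a * b) = B.hp a (k b) * k (B.hm a (k b)))
    (q : G × G × G) :
    Psi B k (d12 (Fi B k) q) = Phi B k (d23 (Fi B k) q) := by
  obtain ⟨x, y, z⟩ := q
  simp only [d12, d23, Fi, Psi, Phi]
  rw [← B.hm_mul x (k y)⁻¹ (B.hp (B.hm y (k z)⁻¹) (k z))⁻¹,
    refl_aux B k hk2 y z, mul_inv_rev]

theorem t2 (p : G × G × G) : Ps B k (d12 B.r p) = d12 B.r (Ps B k p) := by
  obtain ⟨a, b, c⟩ := p
  simp only [d12, Ps, Braiding.r]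
  rw [middle B a b (k c), ← B.hm_mul a (B.hp b (k c)) (B.hm b (k c)), B.compat, B.hm_mul]

theorem t3 (p : G × G × G) : Ph B k (d23 B.r p) = d23 B.r (Ph B k p) := by
  obtain ⟨a, b, c⟩ := p
  simp only [d23, Ph, Braiding.r, B.compat]

theorem t2x (p : G × G × G) : Psi B k (d12 B.r p) = d12 B.r (Psi B k p) := by
  have h : Ps B k (d12 B.r (Psi B k p)) = d12 B.r p :=
    (t2 B k (Psi B k p)).trans (congrArg (d12 B.r) (Ps_Psi B k p))
  calc Psi B k (d12 B.r p) = Psi B k (Ps B k (d12 B.r (Psi B k p))) := by rw [h]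
    _ = d12 B.r (Psi B k p) := Psi_Ps B k _

theorem t3x (p : G × G × G) : Phi B k (d23 B.r p) = d23 B.r (Phi B k p) := by
  have h : Ph B k (d23 B.r (Phi B k p)) = d23 B.r p :=
    (t3 B k (Phi B k p)).trans (congrArg (d23 B.r) (Ph_Phi B k p))
  calc Phi B k (d23 B.r p) = Phi B k (Ph B k (d23 B.r (Phi B k p))) := by rw [h]
    _ = d23 B.r (Phi B k p) := Phi_Ph B k _

theorem t3var (w : G × G × G) : Phi B k (d23 B.r (Ph B k w)) = d23 B.r w := by
  rw [← t3, Phi_Ph]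

theorem t4a (p : G × G × G) : Fi B k (mm23 p) = mm23 (Phi B k p) := rfl

theorem t4b (p : G × G × G) : Fm B k (mm23 p) = mm23 (Ph B k p) := rfl

theorem t5 (p : G × G × G) : mm12 (Ps B k p) = Fm B k (mm12 p) := by
  obtain ⟨a, b, c⟩ := p
  simp only [mm12, Ps, Fm]
  rw [← B.hex2]

theorem t5x (p : G × G × G) : Fi B k (mm12 p) = mm12 (Psi B k p) := by
  obtain ⟨a, b, c⟩ := p
  simp only [mm12, Fi, Psi]
  rw [hp_inv', inv_inv, ← B.hex2]

theorem h1 (p : G × G × G) : B.r (mm23 p) = mm12 (d23 B.r (d12 B.r p)) := by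
  obtain ⟨a, b, c⟩ := p
  simp only [mm12, mm23, d12, d23, Braiding.r]
  rw [B.hex1, B.hm_mul]

theorem h2 (p : G × G × G) : B.r (mm12 p) = mm23 (d12 B.r (d23 B.r p)) := by
  obtain ⟨a, b, c⟩ := p
  simp only [mm12, mm23, d12, d23, Braiding.r]
  rw [B.mul_hp, B.hex2]

theorem d12c (f g h : G × G → G × G) (p : G × G × G) :
    d12 (f ∘ g ∘ h) p = d12 f (d12 g (d12 h p)) := rfl

theorem d23c (f g h : G × G → G × G) (p : G × G × G) :
    d23 (f ∘ g ∘ h) p = d23 f (d23 g (d23 h p)) := rfl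

theorem monoid_trick {M : Type*} (m : M → M → M) (e : M)
    (hassoc : ∀ a b c, m (m a b) c = m a (m b c))
    (hone : ∀ a, m e a = a)
    (hleft : ∀ a, ∃ b, m b a = e) (a : M) : ∃ b, m a b = e ∧ m b a = e := by
  obtain ⟨b, hb⟩ := hleft a
  obtain ⟨c, hc⟩ := hleft b
  have hthis : m a b = m (m c b) (m a b) := by rw [hc, hone]
  have hab : m a b = e := by
    rw [hthis, hassoc, ← hassoc b a b, hb, hone, hc]
  exact ⟨b, hab, hb⟩

end S14

theorem stmt14 {G : Type*} [Group G] (B : Braiding G) (k : G → G)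
    (hk : B.IsGroupReflection k) :
    (∃ Φ Ψ : G × G × G → G × G × G,
      IsGroupDrinfeldTwist B.r (fun p : G × G => (B.hm p.1 (k p.2), p.2)) Φ Ψ)
    ∧ IsBraidedGroupStruct (fun a b : G => B.hm a (k b)⁻¹ * b) (1 : G)
        ((fun p : G × G => (B.hm p.1 (k p.2), p.2)) ∘ B.r ∘
          (fun p : G × G => (B.hm p.1 (k p.2)⁻¹, p.2))) := by
  obtain ⟨hk1, hk2, hk3⟩ := hk
  have hFm : Function.Bijective (S14.Fm B k) :=
    Function.bijective_iff_has_inverse.mpr ⟨S14.Fi B k, S14.Fi_Fm B k, S14.Fm_Fi B k⟩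
  have hFi : Function.Bijective (S14.Fi B k) :=
    Function.bijective_iff_has_inverse.mpr ⟨S14.Fm B k, S14.Fm_Fi B k, S14.Fi_Fm B k⟩
  constructor
  · refine ⟨S14.Ph B k, S14.Ps B k, hFm, ?_, ?_, ?_, ?_, ?_, ?_, ?_, ?_, ?_, ?_, ?_⟩
    · exact Function.bijective_iff_has_inverse.mpr
        ⟨S14.Phi B k, S14.Phi_Ph B k, S14.Ph_Phi B k⟩
    · exact Function.bijective_iff_has_inverse.mpr
        ⟨S14.Psi B k, S14.Psi_Ps B k, S14.Ps_Psi B k⟩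
    · funext p; exact S14.t1 B k hk2 p
    · funext p; exact S14.t2 B k p
    · funext p; exact S14.t3 B k p
    · intro b c
      show S14.Ph B k (1, b, c) = (1, b, c)
      simp [S14.Ph, B.one_hm]
    · intro a b
      show S14.Ps B k (a, b, 1) = (a, b, 1)
      simp [S14.Ps, hk1, B.hm_one, B.hp_one]
    · intro a
      show (B.hm a (k 1), (1 : G)) = (a, 1)
      rw [hk1, B.hm_one]
    · intro b
      show (B.hm 1 (k b), b) = (1, b)
      rw [B.one_hm]
    · intro p; rfl
    · intro p; exact S14.t5 B k p
  · have hassoc : ∀ a b c : G,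
        B.hm (B.hm a (k b)⁻¹ * b) (k c)⁻¹ * c
          = B.hm a (k (B.hm b (k c)⁻¹ * c))⁻¹ * (B.hm b (k c)⁻¹ * c) := by
      intro a b c
      rw [B.hex2, ← B.hm_mul, S14.refl_aux B k hk2 b c, S14.hp_inv' B b (k c),
        mul_inv_rev, inv_inv, mul_assoc]
    have hone : ∀ a : G, B.hm 1 (k a)⁻¹ * a = a := by
      intro a; rw [B.one_hm, one_mul]
    have hleft : ∀ a : G, B.hm (B.hm a⁻¹ (k a)) (k a)⁻¹ * a = 1 := by
      intro a; rw [S14.hm_cancel, inv_mul_cancel]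
    refine ⟨hassoc, hone, ?_, ?_, hFm.comp (B.bij.comp hFi), ?_, ?_, ?_, ?_, ?_⟩
    · intro a
      show B.hm a (k 1)⁻¹ * 1 = a
      rw [hk1, inv_one, B.hm_one, mul_one]
    · exact S14.monoid_trick (fun a b : G => B.hm a (k b)⁻¹ * b) 1 hassoc hone
        (fun a => ⟨B.hm a⁻¹ (k a), hleft a⟩)
    · intro a
      show S14.Fm B k (B.r (S14.Fi B k (a, 1))) = (1, a)
      simp [S14.Fm, S14.Fi, Braiding.r, hk1, B.hm_one, B.hp_one, B.one_hm]
    · intro b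
      show S14.Fm B k (B.r (S14.Fi B k (1, b))) = (b, 1)
      simp [S14.Fm, S14.Fi, Braiding.r, hk1, B.hm_one, B.one_hp, B.one_hm]
    · intro a b
      show B.hm (B.hm (B.hp (B.hm a (k b)⁻¹) b) (k (B.hm (B.hm a (k b)⁻¹) b)))
            (k (B.hm (B.hm a (k b)⁻¹) b))⁻¹ * B.hm (B.hm a (k b)⁻¹) b
          = B.hm a (k b)⁻¹ * b
      rw [S14.hm_cancel, B.compat]
    · funext p
      obtain ⟨a, b, c⟩ := p
      show S14.Fm B k (B.r (S14.Fi B k (S14.mm23 (d23 (S14.Fi B k) (a, b, c)))))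
          = S14.mm12 (d12 (S14.Fi B k) (d23 (S14.Fm B k ∘ B.r ∘ S14.Fi B k)
              (d12 (S14.Fm B k ∘ B.r ∘ S14.Fi B k) (a, b, c))))
      conv_lhs => rw [S14.t4a B k, S14.h1 B, ← S14.t5 B k]
      conv_rhs => rw [S14.d12c, S14.d23c, S14.ta B k hk2, S14.tb B k hk2,
        S14.t3var B k, S14.t2x B k, S14.tc B k hk2]
    · funext p
      obtain ⟨a, b, c⟩ := p
      show S14.Fm B k (B.r (S14.Fi B k (S14.mm12 (d12 (S14.Fi B k) (a, b, c)))))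
          = S14.mm23 (d23 (S14.Fi B k) (d12 (S14.Fm B k ∘ B.r ∘ S14.Fi B k)
              (d23 (S14.Fm B k ∘ B.r ∘ S14.Fi B k) (a, b, c))))
      conv_lhs => rw [S14.t5x B k, S14.h2 B, S14.t4b B k, S14.tc B k hk2,
        ← S14.t3x B k]
      conv_rhs => rw [S14.d23c, S14.d12c, S14.tb B k hk2, S14.ta B k hk2,
        S14.t2x B k, S14.Psi_Ps B k]
end

section
/- Let $(G,r)$ be a braided group with $r(a,b)=(a\rightharpoonup b, a\leftharpoonup b)$, where the right action $\leftharpoonup$ is faithful, and let $k\colon G\to G$ be any map. Define the twisted product $a\cdot^{(k)} b := (a\leftharpoonup k(b)^{-1})\,b$. Then $(G,\cdot^{(k)})$ is a group (with unit $1$) if and only if $k(1)=1$ and $k(ab)=(a\rightharpoonup k(b))\,k(a\leftharpoonup k(b))$ for all $a,b\in G$. -/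
namespace Braiding
variable {G : Type*} [Group G] (B : Braiding G)

lemma hm_hm_inv (a g : G) : B.hm (B.hm a g) g⁻¹ = a := by
  rw [← B.hm_mul, mul_inv_cancel, B.hm_one]

lemma hm_hm_inv' (a g : G) : B.hm (B.hm a g⁻¹) g = a := by
  rw [← B.hm_mul, inv_mul_cancel, B.hm_one]

lemma hp_inv_eq (x g : G) : B.hp (B.hm x g) g⁻¹ = (B.hp x g)⁻¹ := by
  have h := B.hex1 x g g⁻¹
  rw [mul_inv_cancel, B.hp_one] at h
  exact (inv_eq_of_mul_eq_one_right h.symm).symm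

lemma hp_inv_eq' (b g : G) : B.hp b g⁻¹ = (B.hp (B.hm b g⁻¹) g)⁻¹ := by
  have h := B.hp_inv_eq (B.hm b g⁻¹) g
  rwa [B.hm_hm_inv'] at h

end Braiding

theorem stmt15 {G : Type*} [Group G] (B : Braiding G)
    (faithful : ∀ g : G, (∀ x, B.hm x g = x) → g = 1)
    (k : G → G) :
    ((∀ a b c : G, (B.hm (B.hm a (k b)⁻¹ * b) (k c)⁻¹ * c)
          = B.hm a (k (B.hm b (k c)⁻¹ * c))⁻¹ * (B.hm b (k c)⁻¹ * c)) ∧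
      (∀ a : G, B.hm (1 : G) (k a)⁻¹ * a = a) ∧
      (∀ a : G, B.hm a (k 1)⁻¹ * 1 = a) ∧
      (∀ a : G, ∃ b, B.hm a (k b)⁻¹ * b = 1 ∧ B.hm b (k a)⁻¹ * a = 1))
    ↔ (k 1 = 1 ∧ ∀ a b : G, k (a * b) = B.hp a (k b) * k (B.hm a (k b))) := by

  constructor
  · rintro ⟨assoc, lunit, runit, hinv⟩
    have hk1 : k 1 = 1 := by
      have h := faithful (k 1)⁻¹ (fun x => by have hx := runit x; rwa [mul_one] at hx)
      exact inv_eq_one.mp h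
    refine ⟨hk1, ?_⟩
    have hmcancel : ∀ g h : G, (∀ a, B.hm a g = B.hm a h) → g = h := by
      intro g h hgh
      have hall : ∀ a, B.hm a (g * h⁻¹) = a := by
        intro a
        rw [B.hm_mul, hgh, B.hm_hm_inv]
      exact mul_inv_eq_one.mp (faithful _ hall)
    have key : ∀ β γ : G, k (B.hm β (k γ)⁻¹ * γ)
        = B.hp (B.hm β (k γ)⁻¹) (k γ) * k β := by
      intro β γ
      have h1 : ∀ a, B.hm a (k (B.hm β (k γ)⁻¹ * γ))⁻¹
          = B.hm a ((B.hp (B.hm β (k γ)⁻¹) (k γ) * k β)⁻¹) := by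
        intro a
        have h := assoc a β γ
        rw [B.hex2, ← mul_assoc] at h
        have h2 := mul_right_cancel (mul_right_cancel h)
        rw [B.hp_inv_eq', ← B.hm_mul, ← mul_inv_rev] at h2
        exact h2.symm
      exact inv_injective (hmcancel _ _ h1)
    intro a b
    have h := key (B.hm a (k b)) b
    rwa [B.hm_hm_inv] at h
  · rintro ⟨hk1, coc⟩
    have hassoc : ∀ a b c : G, B.hm (B.hm a (k b)⁻¹ * b) (k c)⁻¹ * c
        = B.hm a (k (B.hm b (k c)⁻¹ * c))⁻¹ * (B.hm b (k c)⁻¹ * c) := by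
      intro a b c
      have hk : k (B.hm b (k c)⁻¹ * c) = B.hp (B.hm b (k c)⁻¹) (k c) * k b := by
        rw [coc, B.hm_hm_inv']
      rw [B.hex2, hk, mul_inv_rev, B.hm_mul, ← B.hp_inv_eq', mul_assoc]
    have hlu : ∀ a : G, B.hm (1 : G) (k a)⁻¹ * a = a := by
      intro a; rw [B.one_hm, one_mul]
    have hru : ∀ a : G, B.hm a (k 1)⁻¹ * 1 = a := by
      intro a; rw [hk1, inv_one, B.hm_one, mul_one]
    refine ⟨hassoc, hlu, hru, ?_⟩
    intro a
    set m : G → G → G := fun a b => B.hm a (k b)⁻¹ * b with hmdef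
    have hleft : ∀ x : G, m (B.hm x⁻¹ (k x)) x = 1 := by
      intro x
      show B.hm (B.hm x⁻¹ (k x)) (k x)⁻¹ * x = 1
      rw [B.hm_hm_inv, inv_mul_cancel]
    refine ⟨B.hm a⁻¹ (k a), ?_, hleft a⟩
    set b := B.hm a⁻¹ (k a) with hb
    set b2 := B.hm b⁻¹ (k b) with hb2
    have h1 : m b a = 1 := hleft a
    have h2 : m b2 b = 1 := hleft b
    have massoc : ∀ x y z, m (m x y) z = m x (m y z) := hassoc
    have mlu : ∀ x, m 1 x = x := hlu
    show m a b = 1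
    calc m a b = m (m b2 b) (m a b) := by rw [h2, mlu]
      _ = m b2 (m b (m a b)) := by rw [massoc]
      _ = m b2 (m (m b a) b) := by rw [massoc]
      _ = m b2 (m 1 b) := by rw [h1]
      _ = m b2 b := by rw [mlu]
      _ = 1 := h2
end

section
/- Let $G$ be a group, regarded as the trivial skew brace with braiding $r(a,b)=(b, b^{-1}ab)$. Then a map $k\colon G\to G$ is a group reflection for $(G,r)$ if and only if $k$ is constant on conjugacy classes and is a group anti-homomorphism; in this case the image of $k$ is an abelian subgroup of $G$ and $k$ is also a group homomorphism. -/
theorem stmt17 {G : Type*} [Group G] (k : G → G) :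
    ((k 1 = 1 ∧ (∀ a b : G, k (a * b) = k b * k ((k b)⁻¹ * a * k b)) ∧
        (∀ a b : G, k a = k (b⁻¹ * a * b)))
      ↔ ((∀ a b : G, k (b⁻¹ * a * b) = k a) ∧ k 1 = 1 ∧
          ∀ a b : G, k (a * b) = k b * k a))
    ∧ ((k 1 = 1 ∧ (∀ a b : G, k (a * b) = k b * k ((k b)⁻¹ * a * k b)) ∧
        (∀ a b : G, k a = k (b⁻¹ * a * b)))
      → ((∀ a b : G, k a * k b = k b * k a) ∧ ∀ a b : G, k (a * b) = k a * k b)) := by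
  constructor
  · constructor
    · rintro ⟨h1, h2, h3⟩
      refine ⟨fun a b => (h3 a b).symm, h1, fun a b => ?_⟩
      rw [h2 a b, ← h3 a (k b)]
    · rintro ⟨h3, h1, h2⟩
      exact ⟨h1, fun a b => by rw [h2 a b, h3 a (k b)], fun a b => (h3 a b).symm⟩
  · rintro ⟨h1, h2, h3⟩
    have anti : ∀ a b : G, k (a * b) = k b * k a := fun a b => by
      rw [h2 a b, ← h3 a (k b)]
    have comm : ∀ a b : G, k a * k b = k b * k a := by
      intro a b
      have : k (a * b) = k (b * (b⁻¹ * a * b)) := by group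
      rw [anti a b, anti b (b⁻¹ * a * b), ← h3 a b] at this
      exact this.symm
    exact ⟨comm, fun a b => by rw [anti a b, comm]⟩
end

section
/- Let $G$ be an abelian group with braiding the flip $\tau(a,b)=(b,a)$, and let $\varrho\colon G\times G\to G$, $(a,b)\mapsto\varrho_b(a)$, be such that $\varrho_1 = \mathrm{id}$, $\varrho_b(1)=1$, and $J(a,b)=(\varrho_b(a),b)$ is a bijection of $G\times G$. Then $J$ is a group Drinfeld twist for $(G,\tau)$ if and only if each $\varrho_c$ is a group automorphism of $G$ and $\varrho_{bc}(a) = \varrho_{\varrho_c(b)}(\varrho_c(a))$ holds for all $a,b,c\in G$. -/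
theorem stmt18 {G : Type*} [CommGroup G] (vr : G → G → G)
    (h1 : ∀ a : G, vr 1 a = a) (h2 : ∀ b : G, vr b 1 = 1)
    (hJ : Function.Bijective fun p : G × G => (vr p.2 p.1, p.2)) :
    (∃ Φ Ψ : G × G × G → G × G × G,
      IsGroupDrinfeldTwist (fun p : G × G => (p.2, p.1))
        (fun p : G × G => (vr p.2 p.1, p.2)) Φ Ψ)
    ↔ ((∀ c : G, Function.Bijective (vr c)) ∧
        (∀ c a b : G, vr c (a * b) = vr c a * vr c b) ∧
        ∀ a b c : G, vr (b * c) a = vr (vr c b) (vr c a)) := by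
  have hbij : ∀ c : G, Function.Bijective (vr c) := by
    intro c
    constructor
    · intro a a' h
      have h2' : ((a, c) : G × G) = (a', c) :=
        hJ.1 (show (vr c a, c) = (vr c a', c) by rw [h])
      exact (Prod.ext_iff.mp h2').1
    · intro x
      obtain ⟨⟨a, c'⟩, h⟩ := hJ.2 (x, c)
      simp only [Prod.mk.injEq] at h
      exact ⟨a, h.2 ▸ h.1⟩
  constructor
  · rintro ⟨Φ, Ψ, -, -, -, hmain, hΨr, -, -, -, -, -, hm23, hm12⟩
    refine ⟨hbij, ?_⟩
    have hmain' : ∀ p : G × G × G, d12 (fun p : G × G => (vr p.2 p.1, p.2)) (Ψ p)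
        = d23 (fun p : G × G => (vr p.2 p.1, p.2)) (Φ p) := fun p => congrFun hmain p
    -- components of Ψ and Φ
    have hΨ22 : ∀ a b c : G, (Ψ (a, b, c)).2.2 = c := by
      intro a b c
      have := hm12 (a, b, c)
      simpa using (Prod.ext_iff.mp this).2
    have hΦ22 : ∀ a b c : G, (Φ (a, b, c)).2.2 = c := by
      intro a b c
      have := hmain' (a, b, c)
      simp only [d12, d23, Prod.ext_iff] at this
      rw [← this.2.2]
      exact hΨ22 a b c
    have hΦ1 : ∀ a b c : G, (Φ (a, b, c)).1 = vr (b * c) a := by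
      intro a b c
      have := hm23 (a, b, c)
      simpa using (Prod.ext_iff.mp this).1
    have hΦ21 : ∀ a b c : G, (Φ (a, b, c)).2.1 = b := by
      intro a b c
      have := hm23 (a, b, c)
      have h' := (Prod.ext_iff.mp this).2
      simp only [] at h'
      rw [hΦ22 a b c] at h'
      exact mul_right_cancel h'
    have hΨ21 : ∀ a b c : G, (Ψ (a, b, c)).2.1 = vr c b := by
      intro a b c
      have := hmain' (a, b, c)
      simp only [d12, d23, Prod.ext_iff] at this
      rw [this.2.1, hΦ22 a b c, hΦ21 a b c]
    have hΨ1 : ∀ a b c : G, (Ψ (a, b, c)).1 = vr c a := by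
      intro a b c
      have hflip := congrFun hΨr (a, b, c)
      simp only [Function.comp, d12] at hflip
      have h21 := (Prod.ext_iff.mp (Prod.ext_iff.mp hflip).2).1
      rw [hΨ21 b a c] at h21
      exact h21.symm
    have hmul : ∀ c a b : G, vr c (a * b) = vr c a * vr c b := by
      intro c a b
      have := hm12 (a, b, c)
      have h' := (Prod.ext_iff.mp this).1
      simp only [hΨ1, hΨ21] at h'
      exact h'.symm
    refine ⟨hmul, ?_⟩
    intro a b c
    have := hmain' (a, b, c)
    simp only [d12, d23, Prod.ext_iff] at this
    have h1' := this.1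
    rw [hΨ1 a b c, hΨ21 a b c, hΦ1 a b c] at h1'
    exact h1'.symm
  · rintro ⟨-, hmul, hcoc⟩
    refine ⟨fun p => (vr (p.2.1 * p.2.2) p.1, p.2.1, p.2.2),
            fun p => (vr p.2.2 p.1, vr p.2.2 p.2.1, p.2.2), hJ, ?_, ?_, ?_, ?_, ?_, ?_, ?_,
            ?_, ?_, ?_, ?_⟩
    · constructor
      · rintro ⟨a, b, c⟩ ⟨a', b', c'⟩ h
        simp only [Prod.mk.injEq] at h
        obtain ⟨h1', h2', h3'⟩ := h
        subst h2'; subst h3'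
        exact Prod.mk.injEq .. ▸ ⟨(hbij (b * c)).1 h1', rfl⟩
      · rintro ⟨x, b, c⟩
        obtain ⟨a, ha⟩ := (hbij (b * c)).2 x
        exact ⟨(a, b, c), by simp [ha]⟩
    · constructor
      · rintro ⟨a, b, c⟩ ⟨a', b', c'⟩ h
        simp only [Prod.mk.injEq] at h
        obtain ⟨h1', h2', h3'⟩ := h
        subst h3'
        exact Prod.mk.injEq .. ▸ ⟨(hbij c).1 h1', Prod.mk.injEq .. ▸ ⟨(hbij c).1 h2', rfl⟩⟩
      · rintro ⟨x, y, c⟩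
        obtain ⟨a, ha⟩ := (hbij c).2 x
        obtain ⟨b, hb⟩ := (hbij c).2 y
        exact ⟨(a, b, c), by simp [ha, hb]⟩
    · funext p
      simp only [Function.comp, d12, d23]
      exact Prod.ext_iff.mpr ⟨(hcoc p.1 p.2.1 p.2.2).symm, rfl⟩
    · funext p
      simp [Function.comp, d12]
    · funext p
      simp only [Function.comp, d23]
      rw [mul_comm p.2.2 p.2.1]
    · intro b c; simp [h2]
    · intro a b; simp [h1]
    · intro a; simp [h1]
    · intro b; simp [h2]
    · intro p; rfl
    · intro p; simp [hmul]
end
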